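/- arXiv:2108.08466 — 5 statements merged into one kernel-verified Lean document; each statement's English description precedes it below -/
import Mathlib

section
/- Suppose M carries a topology such that for every p ∈ M the functions x ↦ d x p and x ↦ d p x are continuous. Then for every ray γ and every compact set K ⊆ M, the functions b_{γ,t}(x) = d x (γ t) - t converge to b_γ uniformly on K as t → ∞ (TendstoUniformlyOn along atTop). -/
/-- The Busemann function of a ray `γ` w.r.t. a quasimetric `d`:
`b_γ(x) = ⨅_{t ≥ 0} (d x (γ t) - t)`. -/
noncomputable def busemann {M : Type*} (d : M → M → ℝ) (γ : ℝ → M) (x : M) : ℝ :=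
  ⨅ t : {t : ℝ // 0 ≤ t}, (d x (γ t.1) - t.1)

/-- If `x ↦ d x p` and `x ↦ d p x` are continuous for every `p`, then on
each compact set `K`, the functions `b_{γ,t}(x) = d x (γ t) - t` converge uniformly to
the Busemann function `b_γ` as `t → ∞`. -/
theorem busemann_tendstoUniformlyOn_compact
    {M : Type*} [Nonempty M] [TopologicalSpace M] (d : M → M → ℝ)
    (hd_self : ∀ x, d x x = 0)
    (hd_nonneg : ∀ x y, 0 ≤ d x y)
    (hd_tri : ∀ x y z, d x z ≤ d x y + d y z)
    (hd_cont₁ : ∀ p : M, Continuous fun x => d x p)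
    (hd_cont₂ : ∀ p : M, Continuous fun x => d p x)
    (γ : ℝ → M)
    (hray : ∀ s t : ℝ, 0 ≤ s → s ≤ t → d (γ s) (γ t) = t - s)
    (K : Set M) (hK : IsCompact K) :
    TendstoUniformlyOn (fun (t : ℝ) (x : M) => d x (γ t) - t)
      (busemann d γ) Filter.atTop K := by
  classical
  set b := busemann d γ with hb
  -- boundedness below of the family
  have hbdd : ∀ x : M, BddBelow (Set.range fun t : {t : ℝ // 0 ≤ t} => d x (γ t.1) - t.1) := by
    intro x
    refine ⟨-(d (γ 0) x), ?_⟩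
    rintro _ ⟨⟨t, ht⟩, rfl⟩
    have h1 : d (γ 0) (γ t) = t - 0 := hray 0 t le_rfl ht
    have h2 := hd_tri (γ 0) x (γ t)
    simp only at h1 ⊢
    linarith
  have hb_le : ∀ x : M, ∀ t : ℝ, 0 ≤ t → b x ≤ d x (γ t) - t := by
    intro x t ht
    exact ciInf_le (hbdd x) ⟨t, ht⟩
  -- antitonicity in t on [0, ∞)
  have hmono : ∀ x : M, ∀ s t : ℝ, 0 ≤ s → s ≤ t → d x (γ t) - t ≤ d x (γ s) - s := by
    intro x s t hs hst
    have h1 := hd_tri x (γ s) (γ t)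
    rw [hray s t hs hst] at h1
    linarith
  -- Lipschitz-type bound for b
  have hb_lip : ∀ x y : M, b x ≤ d x y + b y := by
    intro x y
    have h : ∀ t : {t : ℝ // 0 ≤ t}, b x - d x y ≤ d y (γ t.1) - t.1 := by
      intro ⟨t, ht⟩
      have h1 := hd_tri x y (γ t)
      have h2 := hb_le x t ht
      simp only
      linarith
    have := le_ciInf h
    have hby : b y = ⨅ t : {t : ℝ // 0 ≤ t}, (d y (γ t.1) - t.1) := rfl
    linarith [hby ▸ this]
  -- continuity of b
  have hb_cont : Continuous b := by
    rw [continuous_iff_continuousAt]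
    intro x₀
    have hlo : Filter.Tendsto (fun x => b x₀ - d x₀ x) (nhds x₀) (nhds (b x₀)) := by
      have : Filter.Tendsto (fun x => d x₀ x) (nhds x₀) (nhds 0) := by
        have := (hd_cont₂ x₀).tendsto x₀
        rwa [hd_self x₀] at this
      simpa using (tendsto_const_nhds.sub this)
    have hup : Filter.Tendsto (fun x => d x x₀ + b x₀) (nhds x₀) (nhds (b x₀)) := by
      have : Filter.Tendsto (fun x => d x x₀) (nhds x₀) (nhds 0) := by
        have := (hd_cont₁ x₀).tendsto x₀
        rwa [hd_self x₀] at this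
      simpa using (this.add tendsto_const_nhds)
    exact tendsto_of_tendsto_of_tendsto_of_le_of_le hlo hup
      (fun x => by have := hb_lip x₀ x; linarith)
      (fun x => hb_lip x x₀)
  -- main argument
  rw [Metric.tendstoUniformlyOn_iff]
  intro ε hε
  -- for each point pick a time achieving the inf up to ε/2
  have key : ∀ x : M, ∃ t : ℝ, 0 ≤ t ∧ d x (γ t) - t < b x + ε / 2 := by
    intro x
    have hlt : (⨅ t : {t : ℝ // 0 ≤ t}, (d x (γ t.1) - t.1)) < b x + ε / 2 := by
      have : b x < b x + ε / 2 := by linarith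
      exact this
    obtain ⟨⟨t, ht⟩, h⟩ := exists_lt_of_ciInf_lt hlt
    exact ⟨t, ht, h⟩
  choose T hT0 hTlt using key
  set U : M → Set M := fun x => {y | d y (γ (T x)) - T x - b y < ε} with hU
  have hUopen : ∀ x, IsOpen (U x) := by
    intro x
    exact isOpen_lt (((hd_cont₁ (γ (T x))).sub continuous_const).sub hb_cont) continuous_const
  have hUmem : ∀ x, x ∈ U x := by
    intro x
    have := hTlt x
    simp only [hU, Set.mem_setOf_eq]
    linarith
  have hcov : K ⊆ ⋃ x : M, U x := fun x _ => Set.mem_iUnion.2 ⟨x, hUmem x⟩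
  obtain ⟨F, hF⟩ := hK.elim_finite_subcover U hUopen hcov
  have hev : ∀ᶠ t : ℝ in Filter.atTop, 0 ≤ t ∧ ∀ x ∈ F, T x ≤ t := by
    refine (Filter.eventually_ge_atTop 0).and ?_
    rw [Filter.eventually_all_finset]
    exact fun i _ => Filter.eventually_ge_atTop (T i)
  filter_upwards [hev] with t ht y hy
  obtain ⟨ht0, htF⟩ := ht
  have hy' := hF hy
  rw [Set.mem_iUnion₂] at hy'
  obtain ⟨i, hiF, hiy⟩ := hy'
  simp only [hU, Set.mem_setOf_eq] at hiy
  have h1 : b y ≤ d y (γ t) - t := hb_le y t ht0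
  have h2 : d y (γ t) - t ≤ d y (γ (T i)) - T i := hmono y (T i) t (hT0 i) (htF i hiF)
  rw [Real.dist_eq, abs_sub_lt_iff]
  constructor <;> linarith
end

section
/- Let η be a ray, p ∈ M, and ζ : [0,∞) → M a ray with ζ 0 = p which is asymptotic to η in the following sense: there exist a sequence (t_i) with t_i → ∞ and maps ζ_i : [0,∞) → M such that (i) for every i and every s with 0 ≤ s ≤ d p (η (t_i)) one has d p (ζ_i s) = s and s + d (ζ_i s) (η (t_i)) = d p (η (t_i)) (each ζ_i is a minimal unit-speed geodesic from p to η(t_i)), and (ii) for every s ≥ 0, d (ζ s) (ζ_i s) → 0 and d (ζ_i s) (ζ s) → 0 as i → ∞. Then for every s ≥ 0, b_η(ζ s) = b_η(p) - s. -/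
/-- If a ray `ζ` starting at `p` is asymptotic to a ray `η`, i.e. `ζ` is
the limit of minimal unit-speed geodesics `ζ_i` from `p` to `η (t_i)` with `t_i → ∞`,
then `b_η(ζ s) = b_η(p) - s` for all `s ≥ 0`. -/
theorem busemann_of_asymptotic_ray
    {M : Type*} [Nonempty M] (d : M → M → ℝ)
    (hd_self : ∀ x, d x x = 0)
    (hd_nonneg : ∀ x y, 0 ≤ d x y)
    (hd_tri : ∀ x y z, d x z ≤ d x y + d y z)
    (η ζ : ℝ → M) (p : M)
    (hη : ∀ s t : ℝ, 0 ≤ s → s ≤ t → d (η s) (η t) = t - s)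
    (hζ : ∀ s t : ℝ, 0 ≤ s → s ≤ t → d (ζ s) (ζ t) = t - s)
    (hζ0 : ζ 0 = p)
    (tseq : ℕ → ℝ) (ζseq : ℕ → ℝ → M)
    (htseq : Filter.Tendsto tseq Filter.atTop Filter.atTop)
    (hmin : ∀ i : ℕ, ∀ s : ℝ, 0 ≤ s → s ≤ d p (η (tseq i)) →
      d p (ζseq i s) = s ∧ s + d (ζseq i s) (η (tseq i)) = d p (η (tseq i)))
    (hconv₁ : ∀ s : ℝ, 0 ≤ s →
      Filter.Tendsto (fun i => d (ζ s) (ζseq i s)) Filter.atTop (nhds 0))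
    (hconv₂ : ∀ s : ℝ, 0 ≤ s →
      Filter.Tendsto (fun i => d (ζseq i s) (ζ s)) Filter.atTop (nhds 0)) :
    ∀ s : ℝ, 0 ≤ s → busemann d η (ζ s) = busemann d η p - s := by
  -- boundedness of the family defining the Busemann function
  have hbdd : ∀ x : M, BddBelow (Set.range fun t : {t : ℝ // 0 ≤ t} => d x (η t.1) - t.1) := by
    intro x
    refine ⟨-d (η 0) x, ?_⟩
    rintro r ⟨⟨t, ht⟩, rfl⟩
    have h1 : d (η 0) (η t) = t - 0 := hη 0 t le_rfl ht
    have h2 : d (η 0) (η t) ≤ d (η 0) x + d x (η t) := hd_tri _ _ _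
    simp only
    linarith
  have hle : ∀ (x : M) (t : ℝ) (ht : 0 ≤ t), busemann d η x ≤ d x (η t) - t := by
    intro x t ht
    exact ciInf_le (hbdd x) ⟨t, ht⟩
  intro s hs
  have hps : d p (ζ s) = s := by
    have := hζ 0 s le_rfl hs
    rw [hζ0] at this; simpa using this
  have h1 : busemann d η p - s ≤ busemann d η (ζ s) := by
    refine le_ciInf ?_
    rintro ⟨t, ht⟩
    have := hle p t ht
    have htri := hd_tri p (ζ s) (η t)
    simp only
    linarith [hps]
  have h2 : busemann d η (ζ s) ≤ busemann d η p - s := by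
    rw [le_sub_iff_add_le]
    conv_rhs => rw [busemann]
    refine le_ciInf ?_
    rintro ⟨t, ht⟩
    simp only
    rw [show busemann d η (ζ s) + s ≤ d p (η t) - t ↔
      busemann d η (ζ s) ≤ d p (η t) - t - s from by constructor <;> intro <;> linarith]
    refine le_of_forall_pos_le_add ?_
    intro ε hε
    have hev1 : ∀ᶠ i in Filter.atTop, d (ζ s) (ζseq i s) < ε := by
      have := (hconv₁ s hs).eventually (eventually_lt_nhds hε)
      simpa using this
    have hev2 : ∀ᶠ i in Filter.atTop, max t (s + d (η 0) p) ≤ tseq i :=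
      htseq.eventually_ge_atTop _
    obtain ⟨i, hi1, hi2⟩ := (hev1.and hev2).exists
    set T := tseq i with hT
    have hTt : t ≤ T := le_trans (le_max_left _ _) hi2
    have hTs : s + d (η 0) p ≤ T := le_trans (le_max_right _ _) hi2
    have hT0 : 0 ≤ T := le_trans (by have := hd_nonneg (η 0) p; linarith) hTs
    -- D := d p (η T) ≥ s
    have hDlb : T - d (η 0) p ≤ d p (η T) := by
      have h1 : d (η 0) (η T) = T - 0 := hη 0 T le_rfl hT0
      have h2 : d (η 0) (η T) ≤ d (η 0) p + d p (η T) := hd_tri _ _ _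
      linarith
    have hsD : s ≤ d p (η T) := by linarith
    obtain ⟨hm1, hm2⟩ := hmin i s hs hsD
    -- D - T ≤ d p (η t) - t
    have hDub : d p (η T) ≤ d p (η t) + (T - t) := by
      have := hd_tri p (η t) (η T)
      rw [hη t T ht hTt] at this
      linarith
    have hb : busemann d η (ζ s) ≤ d (ζ s) (η T) - T := hle _ T hT0
    have htri : d (ζ s) (η T) ≤ d (ζ s) (ζseq i s) + d (ζseq i s) (η T) := hd_tri _ _ _
    linarith
  linarith
end

section
/- Let η and ζ be rays in (M,d) with ζ 0 = p, and suppose b_η(ζ t) = b_η(p) - t for all t ≥ 0 (ζ is an asymptote of η). Then for every x ∈ M, b_η(x) - b_ζ(x) ≤ b_η(p). -/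
/-- If `ζ` is a ray with `ζ 0 = p` which is an asymptote of the ray `η`,
in the sense that `b_η(ζ t) = b_η(p) - t` for all `t ≥ 0`, then
`b_η(x) - b_ζ(x) ≤ b_η(p)` for every `x`. -/
theorem busemann_sub_busemann_le
    {M : Type*} [Nonempty M] (d : M → M → ℝ)
    (hd_self : ∀ x, d x x = 0)
    (hd_nonneg : ∀ x y, 0 ≤ d x y)
    (hd_tri : ∀ x y z, d x z ≤ d x y + d y z)
    (η ζ : ℝ → M) (p : M)
    (hη : ∀ s t : ℝ, 0 ≤ s → s ≤ t → d (η s) (η t) = t - s)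
    (hζ : ∀ s t : ℝ, 0 ≤ s → s ≤ t → d (ζ s) (ζ t) = t - s)
    (hζ0 : ζ 0 = p)
    (hasym : ∀ t : ℝ, 0 ≤ t → busemann d η (ζ t) = busemann d η p - t) :
    ∀ x : M, busemann d η x - busemann d ζ x ≤ busemann d η p := by
  intro x
  -- boundedness below of the Busemann family for η at any point y
  have hbdd : ∀ y : M, BddBelow (Set.range fun t : {t : ℝ // 0 ≤ t} => d y (η t.1) - t.1) := by
    intro y
    refine ⟨-(d (η 0) y), ?_⟩
    rintro r ⟨t, rfl⟩
    have h1 : d (η 0) (η t.1) ≤ d (η 0) y + d y (η t.1) := hd_tri _ _ _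
    have h2 : d (η 0) (η t.1) = t.1 - 0 := hη 0 t.1 le_rfl t.2
    simp only
    linarith
  -- b_η x ≤ d x y + b_η y
  have hlip : ∀ y : M, busemann d η x ≤ d x y + busemann d η y := by
    intro y
    have : busemann d η x - d x y ≤ busemann d η y := by
      refine le_ciInf fun t => ?_
      have h1 : busemann d η x ≤ d x (η t.1) - t.1 := ciInf_le (hbdd x) t
      have h2 := hd_tri x y (η t.1)
      linarith
    linarith
  -- key: ∀ t ≥ 0, b_η x - b_η p ≤ d x (ζ t) - t
  have key : busemann d η x - busemann d η p ≤ busemann d ζ x := by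
    refine le_ciInf fun t => ?_
    have h1 := hlip (ζ t.1)
    rw [hasym t.1 t.2] at h1
    linarith
  linarith
end

section
/- Let E be a real normed space, s ⊆ E a convex bounded set with 0 in the interior of s, and F = gauge s (the Minkowski functional of s, a Minkowski norm). Let v ∈ E with F v = 1, and suppose F has Fréchet derivative L : E →L[ℝ] ℝ at v (HasFDerivAt F L v). Then for every y ∈ E, the function t ↦ F (t • v - y) - t tends to -(L y) as t → ∞; that is, the Busemann function of the ray t ↦ t • v (for the quasimetric d x y = F (y - x)) is given by b_v(y) = -(L y), which in coordinates reads b_v(y) = -y^i ∂F/∂y^i(v). -/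
open Filter Topology

/-!
The gauge `g` is positively homogeneous, so `g (t • v - y) = t * g (v - t⁻¹ • y)` for `t > 0`
and `g (t • v - y) - t * g v` is the difference quotient of `u ↦ g (v - u • y)` at `0` with
step `u = t⁻¹`. As `t → ∞` it therefore tends to the derivative `-(L y)` of that map.
-/

theorem HasDerivAt.tendsto_smul_sub_inv_atTop {F : Type*} [NormedAddCommGroup F]
    [NormedSpace ℝ F] {f : ℝ → F} {f' : F} {x : ℝ} (h : HasDerivAt f f' x) :
    Tendsto (fun t : ℝ => t • (f (x + t⁻¹) - f x)) atTop (𝓝 f') := by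
  simpa only [Function.comp_def, inv_inv] using
    h.tendsto_slope_zero_right.comp tendsto_inv_atTop_nhdsGT_zero

theorem HasFDerivAt.tendsto_sub_smul_of_pos_homogeneous {E F : Type*}
    [NormedAddCommGroup E] [NormedSpace ℝ E] [NormedAddCommGroup F] [NormedSpace ℝ F]
    {f : E → F} {L : E →L[ℝ] F} {v : E}
    (hf : ∀ t : ℝ, 0 < t → ∀ x, f (t • x) = t • f x) (hL : HasFDerivAt f L v) (y : E) :
    Tendsto (fun t : ℝ => f (t • v + y) - t • f v) atTop (𝓝 (L y)) := by
  have hline : HasDerivAt (fun u : ℝ => f (v + u • y)) (L y) 0 := by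
    have hpath : HasDerivAt (fun u : ℝ => v + u • y) y 0 := by
      simpa using ((hasDerivAt_id (0 : ℝ)).smul_const y).const_add v
    exact (by simpa using hL : HasFDerivAt f L (v + (0 : ℝ) • y)).comp_hasDerivAt 0 hpath
  refine hline.tendsto_smul_sub_inv_atTop.congr' ?_
  filter_upwards [eventually_gt_atTop 0] with t ht
  rw [zero_add, zero_smul, add_zero, smul_sub, ← hf t ht, smul_add, smul_inv_smul₀ ht.ne']

theorem busemann_minkowski_gauge_general
    {E : Type*} [NormedAddCommGroup E] [NormedSpace ℝ E]
    (s : Set E)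
    (v : E) (hv : gauge s v = 1)
    (L : E →L[ℝ] ℝ) (hL : HasFDerivAt (gauge s) L v) :
    ∀ y : E, Filter.Tendsto (fun t : ℝ => gauge s (t • v - y) - t)
      Filter.atTop (nhds (-(L y))) := by
  intro y
  have h := hL.tendsto_sub_smul_of_pos_homogeneous
    (fun t ht x => gauge_smul_of_nonneg ht.le x) (-y)
  simpa only [← sub_eq_add_neg, hv, smul_eq_mul, mul_one, map_neg] using h

/-- In a real normed space with a Minkowski norm `F = gauge s`
(for `s` convex, bounded, with `0` in its interior), if `F v = 1` and `F` has Fréchet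
derivative `L` at `v`, then the Busemann function of the ray `t ↦ t • v` for
`d x y = F (y - x)` is `b_v(y) = -(L y)`:
`F (t • v - y) - t → -(L y)` as `t → ∞`. -/
theorem busemann_minkowski_gauge
    {E : Type*} [NormedAddCommGroup E] [NormedSpace ℝ E]
    (s : Set E) (hs_conv : Convex ℝ s) (hs_bdd : Bornology.IsBounded s)
    (hs_int : (0 : E) ∈ interior s)
    (v : E) (hv : gauge s v = 1)
    (L : E →L[ℝ] ℝ) (hL : HasFDerivAt (gauge s) L v) :
    ∀ y : E, Filter.Tendsto (fun t : ℝ => gauge s (t • v - y) - t)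
      Filter.atTop (nhds (-(L y))) :=
  busemann_minkowski_gauge_general s v hv L hL
end

section
/- Let M carry a measurable-space structure and μ be a measure on M, let γ be a ray, and let g : M → ℝ be a function such that x ↦ (d x (γ 0) + d (γ 0) x) * |g x| is integrable with respect to μ, the function x ↦ b_γ(x) * g x is measurable, and for each t ≥ 0 the function x ↦ (d x (γ t) - t) * g x is measurable. Then ∫ (d x (γ t) - t) * g x ∂μ tends to ∫ b_γ(x) * g x ∂μ as t → ∞. (This is the convergence Δ b_{γ,t} → Δ b_γ in the distributional sense, obtained by testing against g = Δφ for a test function φ.) -/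
open MeasureTheory

/-- Convergence of `Δ b_{γ,t}` to `Δ b_γ` in the distributional sense:
testing against an (integrably dominated, measurable) function `g`, the integrals
`∫ (d x (γ t) - t) * g x ∂μ` converge to `∫ b_γ(x) * g x ∂μ` as `t → ∞`. -/
theorem busemann_integral_tendsto
    {M : Type*} [Nonempty M] [MeasurableSpace M] (μ : Measure M)
    (d : M → M → ℝ)
    (hd_self : ∀ x, d x x = 0)
    (hd_nonneg : ∀ x y, 0 ≤ d x y)
    (hd_tri : ∀ x y z, d x z ≤ d x y + d y z)
    (γ : ℝ → M)
    (hray : ∀ s t : ℝ, 0 ≤ s → s ≤ t → d (γ s) (γ t) = t - s)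
    (g : M → ℝ)
    (hint : Integrable (fun x => (d x (γ 0) + d (γ 0) x) * |g x|) μ)
    (hmeas_b : Measurable fun x => busemann d γ x * g x)
    (hmeas_t : ∀ t : ℝ, 0 ≤ t → Measurable fun x => (d x (γ t) - t) * g x) :
    Filter.Tendsto (fun t : ℝ => ∫ x, (d x (γ t) - t) * g x ∂μ)
      Filter.atTop (nhds (∫ x, busemann d γ x * g x ∂μ)) := by
  -- basic bounds
  have hlb : ∀ x, ∀ t : ℝ, 0 ≤ t → -(d (γ 0) x) ≤ d x (γ t) - t := by
    intro x t ht
    have h1 : d (γ 0) (γ t) = t := by simpa using hray 0 t le_rfl ht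
    have h2 : d (γ 0) (γ t) ≤ d (γ 0) x + d x (γ t) := hd_tri _ _ _
    linarith
  have hub : ∀ x, ∀ t : ℝ, 0 ≤ t → d x (γ t) - t ≤ d x (γ 0) := by
    intro x t ht
    have h2 : d x (γ t) ≤ d x (γ 0) + d (γ 0) (γ t) := hd_tri _ _ _
    have h1 : d (γ 0) (γ t) = t := by simpa using hray 0 t le_rfl ht
    linarith
  have hanti : ∀ x, ∀ s t : ℝ, 0 ≤ s → s ≤ t → d x (γ t) - t ≤ d x (γ s) - s := by
    intro x s t hs hst
    have h2 : d x (γ t) ≤ d x (γ s) + d (γ s) (γ t) := hd_tri _ _ _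
    have h1 : d (γ s) (γ t) = t - s := hray s t hs hst
    linarith
  -- pointwise convergence to the Busemann function
  have hptw : ∀ x, Filter.Tendsto (fun t : ℝ => d x (γ t) - t) Filter.atTop
      (nhds (busemann d γ x)) := by
    intro x
    have key : Filter.Tendsto (fun t : Set.Ici (0:ℝ) => d x (γ t.1) - t.1) Filter.atTop
        (nhds (busemann d γ x)) := by
      have hA : Antitone (fun t : Set.Ici (0:ℝ) => d x (γ t.1) - t.1) := by
        intro s t hst
        exact hanti x s t s.2 hst
      have hB : BddBelow (Set.range (fun t : Set.Ici (0:ℝ) => d x (γ t.1) - t.1)) := by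
        refine ⟨-(d (γ 0) x), ?_⟩
        rintro _ ⟨t, rfl⟩
        exact hlb x t t.2
      exact tendsto_atTop_ciInf hA hB
    exact (Filter.tendsto_comp_val_Ici_atTop (a := (0:ℝ))).mp key
  -- dominated convergence
  refine tendsto_integral_filter_of_dominated_convergence
    (fun x => (d x (γ 0) + d (γ 0) x) * |g x|) ?_ ?_ hint ?_
  · filter_upwards [Filter.eventually_ge_atTop (0:ℝ)] with t ht
    exact (hmeas_t t ht).aestronglyMeasurable
  · filter_upwards [Filter.eventually_ge_atTop (0:ℝ)] with t ht
    refine Filter.Eventually.of_forall fun x => ?_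
    rw [Real.norm_eq_abs, abs_mul]
    refine mul_le_mul_of_nonneg_right ?_ (abs_nonneg _)
    rw [abs_le]
    constructor
    · have := hlb x t ht
      have := hd_nonneg x (γ 0)
      linarith
    · have := hub x t ht
      have := hd_nonneg (γ 0) x
      linarith
  · refine Filter.Eventually.of_forall fun x => ?_
    exact (hptw x).mul_const (g x)
end
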